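/- Let G be the group presented on generators a, b, t with relators t·a·t⁻¹·(a·b·a)⁻¹ and t·b·t⁻¹·(a·b)⁻¹ (a presentation of the figure eight knot group), and let N be the normal closure in G of the images of a⁴, (a·t)³, and (a·t·a)³. Then the quotient G/N is isomorphic to the group presented on generators a, t with relators a⁴, (a·t)³, and (a·t·a)³. -/
import Mathlib


noncomputable section

namespace Fig8

/-- Relators of the figure eight knot group presentation
⟨a,b,t | tat⁻¹=aba, tbt⁻¹=ab⟩, with a = of 0, b = of 1, t = of 2. -/
def rels₁ : Set (FreeGroup (Fin 3)) :=
  { FreeGroup.of 2 * FreeGroup.of 0 * (FreeGroup.of 2)⁻¹ *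
      (FreeGroup.of 0 * FreeGroup.of 1 * FreeGroup.of 0)⁻¹,
    FreeGroup.of 2 * FreeGroup.of 1 * (FreeGroup.of 2)⁻¹ *
      (FreeGroup.of 0 * FreeGroup.of 1)⁻¹ }

/-- The figure eight knot group. -/
abbrev G := PresentedGroup rels₁

/-- Normal closure of the images of a⁴, (a·t)³ and (a·t·a)³ in G. -/
abbrev N : Subgroup G :=
  Subgroup.normalClosure
    { (PresentedGroup.of 0 : G) ^ 4,
      ((PresentedGroup.of 0 : G) * PresentedGroup.of 2) ^ 3,
      ((PresentedGroup.of 0 : G) * PresentedGroup.of 2 * PresentedGroup.of 0) ^ 3 }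

/-- Relators a⁴, (a·t)³, (a·t·a)³ with a = of 0, t = of 1. -/
def rels₂ : Set (FreeGroup (Fin 2)) :=
  { (FreeGroup.of 0) ^ 4,
    (FreeGroup.of 0 * FreeGroup.of 1) ^ 3,
    (FreeGroup.of 0 * FreeGroup.of 1 * FreeGroup.of 0) ^ 3 }

/-! ### Auxiliary material -/

lemma rel_one {α : Type*} {rels : Set (FreeGroup α)} {r : FreeGroup α} (h : r ∈ rels) :
    PresentedGroup.mk rels r = 1 :=
  (QuotientGroup.eq_one_iff _).2 (Subgroup.subset_normalClosure h)

/-- The key computation: the second figure-eight relator, with `b` eliminated, is a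
consequence of the relators `a⁴, (at)³, (ata)³`. -/
lemma key {H : Type*} [Group H] (a t : H) (h1 : a ^ 4 = 1) (h2 : (a * t) ^ 3 = 1)
    (h3 : (a * t * a) ^ 3 = 1) :
    t * a⁻¹ * t * a * t⁻¹ * a⁻¹ * t⁻¹ * a * t * a⁻¹ * t⁻¹ = 1 := by
  have h1' : a * a * a * a = 1 := by rw [← h1, pow_succ, pow_succ, pow_succ, pow_one]
  have h2' : a * t * (a * t) * (a * t) = 1 := by rw [← h2, pow_succ, pow_succ, pow_one]
  have h3' : a * t * a * (a * t * a) * (a * t * a) = 1 := by rw [← h3, pow_succ, pow_succ, pow_one]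
  have e : t * a⁻¹ * t * a * t⁻¹ * a⁻¹ * t⁻¹ * a * t * a⁻¹ * t⁻¹
      = (t * (a * a * a * a)⁻¹ * t⁻¹) *
        ((t * (a * a * a) * t * a) * (a * t * (a * t) * (a * t))⁻¹ * (t * (a * a * a) * t * a)⁻¹) *
        ((t * (a * a)) * (a * t * a * (a * t * a) * (a * t * a)) * (t * (a * a))⁻¹) := by
    group
  rw [e, h1', h2', h3']
  group

abbrev H₂ := PresentedGroup rels₂

def A : H₂ := PresentedGroup.of 0
def T : H₂ := PresentedGroup.of 1

lemma hA4 : A ^ 4 = 1 := by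
  have h := rel_one (rels := rels₂) (Set.mem_insert _ _)
  simpa [A, PresentedGroup.of, map_pow] using h

lemma hAT : (A * T) ^ 3 = 1 := by
  have h := rel_one (rels := rels₂) (r := (FreeGroup.of 0 * FreeGroup.of 1) ^ 3)
    (by right; left; rfl)
  simpa [A, T, PresentedGroup.of, map_pow, map_mul] using h

lemma hATA : (A * T * A) ^ 3 = 1 := by
  have h := rel_one (rels := rels₂) (r := (FreeGroup.of 0 * FreeGroup.of 1 * FreeGroup.of 0) ^ 3)
    (by right; right; rfl)
  simpa [A, T, PresentedGroup.of, map_pow, map_mul] using h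

/-- Images of the three generators of the figure-eight presentation. -/
def f3 : Fin 3 → H₂
  | 0 => A
  | 1 => A⁻¹ * T * A * T⁻¹ * A⁻¹
  | 2 => T

lemma f3_rels : ∀ r ∈ rels₁, FreeGroup.lift f3 r = 1 := by
  intro r hr
  rcases hr with h | h
  · subst h
    simp only [map_mul, map_inv, FreeGroup.lift_apply_of, f3]
    group
  · rcases h with h
    subst h
    simp only [map_mul, map_inv, FreeGroup.lift_apply_of, f3]
    have k := key A T hA4 hAT hATA
    calc T * (A⁻¹ * T * A * T⁻¹ * A⁻¹) * T⁻¹ * (A * (A⁻¹ * T * A * T⁻¹ * A⁻¹))⁻¹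
        = T * A⁻¹ * T * A * T⁻¹ * A⁻¹ * T⁻¹ * A * T * A⁻¹ * T⁻¹ := by group
      _ = 1 := k

def ψ₀ : G →* H₂ := PresentedGroup.toGroup f3_rels

lemma N_le_ker : N ≤ ψ₀.ker := by
  apply Subgroup.normalClosure_le_normal
  intro x hx
  rcases hx with h | h | h
  · subst h
    simp [MonoidHom.mem_ker, ψ₀, map_pow, PresentedGroup.toGroup.of, f3, hA4]
  · subst h
    simp [MonoidHom.mem_ker, ψ₀, map_pow, map_mul, PresentedGroup.toGroup.of, f3, hAT]
  · rcases h with h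
    subst h
    simp [MonoidHom.mem_ker, ψ₀, map_pow, map_mul, PresentedGroup.toGroup.of, f3, hATA]

def ψ : G ⧸ N →* H₂ := QuotientGroup.lift N ψ₀ N_le_ker

/-- Images of the two generators. -/
def g2 : Fin 2 → G ⧸ N
  | 0 => QuotientGroup.mk' N (PresentedGroup.of 0)
  | 1 => QuotientGroup.mk' N (PresentedGroup.of 2)

lemma g2_rels : ∀ r ∈ rels₂, FreeGroup.lift g2 r = 1 := by
  intro r hr
  rcases hr with h | h | h
  · subst h
    simp only [map_pow, FreeGroup.lift_apply_of, g2]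
    rw [← map_pow, QuotientGroup.mk'_apply, QuotientGroup.eq_one_iff]
    exact Subgroup.subset_normalClosure (Set.mem_insert _ _)
  · subst h
    simp only [map_pow, map_mul, FreeGroup.lift_apply_of, g2]
    rw [← map_mul, ← map_pow, QuotientGroup.mk'_apply, QuotientGroup.eq_one_iff]
    exact Subgroup.subset_normalClosure (by right; left; rfl)
  · rcases h with h
    subst h
    simp only [map_pow, map_mul, FreeGroup.lift_apply_of, g2]
    rw [← map_mul, ← map_mul, ← map_pow, QuotientGroup.mk'_apply, QuotientGroup.eq_one_iff]
    exact Subgroup.subset_normalClosure (by right; right; rfl)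

def φ : H₂ →* G ⧸ N := PresentedGroup.toGroup g2_rels

/-- In `G`, the generator `b` is expressible in terms of `a` and `t`. -/
lemma hb : (PresentedGroup.of 1 : G)
    = (PresentedGroup.of 0 : G)⁻¹ * PresentedGroup.of 2 * PresentedGroup.of 0 *
      (PresentedGroup.of 2 : G)⁻¹ * (PresentedGroup.of 0 : G)⁻¹ := by
  have h := rel_one (rels := rels₁) (Set.mem_insert _ _)
  simp only [map_mul, map_inv] at h
  have h2 : (PresentedGroup.of 2 : G) * PresentedGroup.of 0 * (PresentedGroup.of 2 : G)⁻¹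
      = PresentedGroup.of 0 * PresentedGroup.of 1 * PresentedGroup.of 0 := by
    have := mul_inv_eq_one.mp h
    exact this
  calc (PresentedGroup.of 1 : G)
      = (PresentedGroup.of 0 : G)⁻¹ *
        (PresentedGroup.of 0 * PresentedGroup.of 1 * PresentedGroup.of 0) *
        (PresentedGroup.of 0 : G)⁻¹ := by group
    _ = _ := by rw [← h2]; group

lemma comp_φψ : φ.comp ψ = MonoidHom.id (G ⧸ N) := by
  apply QuotientGroup.monoidHom_ext
  apply PresentedGroup.ext
  intro x
  show φ (ψ (QuotientGroup.mk' N (PresentedGroup.of x))) = QuotientGroup.mk' N (PresentedGroup.of x)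
  rw [show ψ (QuotientGroup.mk' N (PresentedGroup.of x)) = ψ₀ (PresentedGroup.of x) from rfl,
    show ψ₀ (PresentedGroup.of x) = f3 x from PresentedGroup.toGroup.of _]
  fin_cases x
  · exact PresentedGroup.toGroup.of _
  · show φ (A⁻¹ * T * A * T⁻¹ * A⁻¹) = (QuotientGroup.mk' N) (PresentedGroup.of 1)
    rw [hb]
    simp only [map_mul, map_inv]
    rw [show φ A = g2 0 from PresentedGroup.toGroup.of _,
      show φ T = g2 1 from PresentedGroup.toGroup.of _]
    rfl
  · exact PresentedGroup.toGroup.of _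

lemma comp_ψφ : ψ.comp φ = MonoidHom.id H₂ := by
  apply PresentedGroup.ext
  intro x
  show ψ (φ (PresentedGroup.of x)) = PresentedGroup.of x
  rw [show φ (PresentedGroup.of x) = g2 x from PresentedGroup.toGroup.of _]
  fin_cases x
  · show ψ (QuotientGroup.mk' N (PresentedGroup.of 0)) = _
    rw [show ψ (QuotientGroup.mk' N (PresentedGroup.of 0)) = ψ₀ (PresentedGroup.of 0) from rfl]
    exact PresentedGroup.toGroup.of _
  · show ψ (QuotientGroup.mk' N (PresentedGroup.of 2)) = _
    rw [show ψ (QuotientGroup.mk' N (PresentedGroup.of 2)) = ψ₀ (PresentedGroup.of 2) from rfl]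
    exact PresentedGroup.toGroup.of _

theorem stmt18 : Nonempty ((G ⧸ N) ≃* PresentedGroup rels₂) :=
  ⟨MonoidHom.toMulEquiv ψ φ comp_φψ comp_ψφ⟩

end Fig8
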